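/- Let 𝓕_Leb denote the family of all Lebesgue-measurable subsets of ℂ of positive Lebesgue measure, and 𝓕_Baire the family of all subsets of ℂ that have the Baire property and are non-meager. The set SES(ℂ, 𝓕_Baire) \ SES(ℂ, 𝓕_Leb) is strongly 2^𝔠-algebrable in the algebra ℂ^ℂ, where 𝔠 is the cardinality of the continuum. -/

import Mathlib

open Cardinal

/-- A subset `E` of a commutative `K`-algebra `A` is strongly `lam`-algebrable: `E ∪ {0}`
contains a free commutative `K`-algebra with `lam` free generators; concretely, there is an
injective family of `lam` elements of `E` such that every nonzero polynomial over `K` without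
constant term, evaluated at distinct members of the family, is nonzero and belongs to `E`. -/
def StronglyAlgebrable (K : Type) {A : Type} [CommRing K] [CommRing A] [Algebra K A]
    (E : Set A) (lam : Cardinal) : Prop :=
  ∃ (ι : Type) (x : ι → A), #ι = lam ∧ Function.Injective x ∧
    (∀ i, x i ∈ E) ∧
    ∀ n : ℕ, 0 < n → ∀ P : MvPolynomial (Fin n) K, P ≠ 0 →
      MvPolynomial.constantCoeff P = 0 →
      ∀ ξ : Fin n → ι, Function.Injective ξ →
        MvPolynomial.aeval (fun i => x (ξ i)) P ≠ 0 ∧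
        MvPolynomial.aeval (fun i => x (ξ i)) P ∈ E

/-- `f ∈ SES(ℂ, 𝓕)`: for every `F ∈ 𝓕` there are `n ≥ 1` and a complex polynomial `P` in
`n` variables with `f(F) = P(ℂⁿ)`, and each fiber of `f` over a point of `f(F)`, intersected
with `F`, has cardinality `𝔠`. -/
def SESC (𝓕 : Set (Set ℂ)) : Set (ℂ → ℂ) :=
  {f | ∀ F ∈ 𝓕,
    (∃ n : ℕ, 0 < n ∧ ∃ P : MvPolynomial (Fin n) ℂ,
      f '' F = Set.range fun t : Fin n → ℂ => MvPolynomial.eval t P) ∧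
    ∀ y ∈ f '' F, #{x : ℂ | x ∈ F ∧ f x = y} = Cardinal.continuum}

/-- The family of Lebesgue-measurable subsets of `ℂ` of positive Lebesgue measure
(Lebesgue measurability = null-measurability with respect to the volume measure). -/
def LebFamily : Set (Set ℂ) :=
  {A | MeasureTheory.NullMeasurableSet A ∧ 0 < MeasureTheory.volume A}

/-- A set has the Baire property if it differs from some open set by a meager set. -/
def HasBaireProperty {α : Type} [TopologicalSpace α] (s : Set α) : Prop :=
  ∃ u : Set α, IsOpen u ∧ IsMeagre (symmDiff s u)

/-- The family of subsets of `ℂ` which have the Baire property and are non-meager. -/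
def BaireFamily : Set (Set ℂ) :=
  {A | HasBaireProperty A ∧ ¬ IsMeagre A}

/-!
Fix a dense open set `U ⊆ ℂ` whose complement has positive measure. By a transfinite
recursion of length `𝔠` one builds `h : ℂ → D`, equal to the empty table `0` outside `U`, each
of whose fibres meets every non-meager set with the Baire property in `𝔠` points: such a set
contains `u ∩ G` with `u` open and `G` a dense `G_δ`, and there are only `𝔠` Borel sets to
serve. Here `D` is the set of finite tables `(F, v)`, `F ⊆ ℂ` finite and `v : 𝒫(F) → ℂ`, and
the generator attached to `S ⊆ ℂ` is `z ↦ v (S ∩ F)` where `h z = (F, v)`. Distinct sets are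
separated by finitely many points, so for distinct `S₁, …, Sₙ` the map `(F, v) ↦ (v (Sᵢ ∩ F))ᵢ`
is onto `ℂⁿ`. Hence `P(S₁, …, Sₙ) = Φ ∘ h` with `Φ(D) = P(ℂⁿ)`, which gives membership in
`SES(ℂ, 𝓕_Baire)`. When `P(0) = 0` this function vanishes off `U`, so on `Uᶜ ∪ {z₀}` the fibre
through a point `z₀` with nonzero value is a singleton.
-/

open Cardinal Set Function Metric MeasureTheory
open scoped symmDiff

universe u

def FinTable (α β : Type*) : Type _ := Σ F : Finset α, Set F → β

namespace FinTable

variable {α β : Type*}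

def eval (S : Set α) (d : FinTable α β) : β := d.2 {x | (x : α) ∈ S}

instance [Zero β] : Zero (FinTable α β) := ⟨⟨∅, 0⟩⟩

@[simp]
theorem eval_zero [Zero β] (S : Set α) : (0 : FinTable α β).eval S = 0 := rfl

theorem surjective_eval_pi [Zero β] {ι : Type*} [Finite ι] {S : ι → Set α} (hS : Injective S) :
    Surjective fun (d : FinTable α β) i => d.eval (S i) := by
  have hsep : ∀ p : {p : ι × ι // p.1 ≠ p.2}, (S p.1.1 ∆ S p.1.2).Nonempty := fun p =>
    symmDiff_nonempty.2 fun h => p.2 (hS h)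
  choose z hz using hsep
  let F : Finset α := (finite_range z).toFinset
  have hT : Injective fun i => {x : F | (x : α) ∈ S i} := by
    intro i j hij
    by_contra hne
    have hzF : z ⟨(i, j), hne⟩ ∈ F := (finite_range z).mem_toFinset.2 (mem_range_self _)
    have hmem : z ⟨(i, j), hne⟩ ∈ S i ↔ z ⟨(i, j), hne⟩ ∈ S j := Set.ext_iff.1 hij ⟨_, hzF⟩
    rcases hz ⟨(i, j), hne⟩ with ⟨hi, hj⟩ | ⟨hj, hi⟩
    exacts [hj (hmem.1 hi), hi (hmem.2 hj)]
  intro y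
  exact ⟨⟨F, extend _ y 0⟩, funext fun i => hT.extend_apply y 0 i⟩

theorem mk_le_continuum {α β : Type u} [Infinite α] (hα : #α ≤ 𝔠) (hβ : #β ≤ 𝔠) :
    #(FinTable α β) ≤ 𝔠 := by
  have hfiber (F : Finset α) : #(Set F → β) ≤ 𝔠 := by
    obtain ⟨n, hn⟩ := lt_aleph0.1 (lt_aleph0_of_finite (Set F))
    rw [← power_def, hn]
    exact (power_le_power_right hβ).trans (power_nat_le aleph0_le_continuum)
  calc #(FinTable α β) ≤ sum fun _ : Finset α => 𝔠 :=
        (mk_sigma _).trans_le (sum_le_sum _ _ hfiber)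
    _ = #α * 𝔠 := by rw [sum_const', mk_finset_of_infinite]
    _ ≤ 𝔠 * 𝔠 := mul_le_mul_left hα _
    _ = 𝔠 := mul_eq_self aleph0_le_continuum

end FinTable

theorem exists_injective_forall_mem {ι X : Type u} (T : ι → Set X) (hT : ∀ i, #ι ≤ #(T i)) :
    ∃ f : ι → X, Injective f ∧ ∀ i, f i ∈ T i := by
  obtain ⟨e⟩ : Nonempty ((#ι).ord.ToType ≃ ι) := Cardinal.eq.1 (mk_toType _ |>.trans (card_ord _))
  have hstep (a) (prev : ∀ b < a, X) : ∃ x ∈ T (e a), ∀ b (hb : b < a), prev b hb ≠ x := by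
    by_contra! hcon
    have hsub : T (e a) ⊆ range fun b : Iio a => prev b b.2 := fun x hx => by
      obtain ⟨b, hb, rfl⟩ := hcon x hx
      exact ⟨⟨b, hb⟩, rfl⟩
    have hlt : #(Iio a) < #ι := by simpa using mk_Iio_lt a (by simp)
    exact (hlt.trans_le (hT _)).not_ge
      ((mk_le_mk_of_subset hsub).trans mk_range_le)
  choose g hgT hgne using hstep
  let f := WellFoundedLT.fix g
  have hf (a) : f a = g a fun b _ => f b := WellFoundedLT.fix_eq g a
  have hf_inj : Injective f := by
    intro a b hab
    by_contra hne
    rcases lt_or_gt_of_ne hne with h | h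
    · exact hgne b (fun c _ => f c) a h (hab.trans (hf b))
    · exact hgne a (fun c _ => f c) b h (hab.symm.trans (hf a))
  refine ⟨f ∘ e.symm, hf_inj.comp e.symm.injective, fun i => ?_⟩
  have := hgT (e.symm i) fun b _ => f b
  rwa [← hf, Equiv.apply_symm_apply] at this

theorem continuum_le_mk_inter_of_mem_residual {E : Type*} [NormedAddCommGroup E]
    [NormedSpace ℝ E] [CompleteSpace E] [Nontrivial E] {u s : Set E} (hu : IsOpen u)
    (hne : u.Nonempty) (hs : s ∈ residual E) : 𝔠 ≤ #(u ∩ s : Set E) := by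
  set X := u ∩ s
  obtain ⟨x, hx⟩ := hne
  obtain ⟨ε, hε, hball⟩ := Metric.isOpen_iff.1 hu x hx
  -- `X - X` contains a ball, because `X` meets each of its small translates
  have hdiff : ball (0 : E) ε ⊆ range fun p : X × X => (p.1 - p.2 : E) := by
    intro w hw
    have hs' : s ∩ (· - w) ⁻¹' s ∈ residual E :=
      Filter.inter_mem hs (tendsto_residual_of_isOpenMap (Homeomorph.subRight w).continuous
        (Homeomorph.subRight w).isOpenMap hs)
    have hV : (u ∩ (· - w) ⁻¹' u).Nonempty := by
      refine ⟨x + w, hball ?_, by simpa using hx⟩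
      simpa [dist_eq_norm] using hw
    obtain ⟨p, ⟨hpu, hpwu⟩, hps, hpws⟩ := (dense_of_mem_residual hs').inter_open_nonempty _
      (hu.inter (hu.preimage (continuous_sub_right w))) hV
    exact ⟨(⟨p, hpu, hps⟩, ⟨p - w, hpwu, hpws⟩), sub_sub_cancel p w⟩
  have h : 𝔠 ≤ max #X ℵ₀ := calc
    𝔠 ≤ #(ball (0 : E) ε) := continuum_le_cardinal_of_isOpen ℝ isOpen_ball (nonempty_ball.2 hε)
    _ ≤ #(X × X) := (mk_le_mk_of_subset hdiff).trans mk_range_le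
    _ ≤ max #X ℵ₀ := by simpa using mul_le_max #X #X
  simpa [aleph0_lt_continuum.not_ge] using h

theorem HasBaireProperty.exists_isOpen_inter_subset {X : Type} [TopologicalSpace X]
    [BaireSpace X] {A : Set X} (hA : HasBaireProperty A) (hnm : ¬IsMeagre A) :
    ∃ u, IsOpen u ∧ u.Nonempty ∧ ∃ t, IsGδ t ∧ Dense t ∧ u ∩ t ⊆ A := by
  obtain ⟨u, hu, hm⟩ := hA
  have hune : u.Nonempty := nonempty_iff_ne_empty.2 fun h =>
    hnm (by rwa [h, ← bot_eq_empty, symmDiff_bot] at hm)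
  have hres : (u \ A)ᶜ ∈ residual X := hm.mono fun z hz => Or.inr hz
  obtain ⟨t, hts, htG, htd⟩ := mem_residual.1 hres
  exact ⟨u, hu, hune, t, htG, htd, fun z hz => by_contra fun hzA => hts hz.2 ⟨hz.1, hzA⟩⟩

theorem mk_measurableSet_le_continuum {X : Type*} [TopologicalSpace X] [SecondCountableTopology X]
    [MeasurableSpace X] [BorelSpace X] : #{s : Set X // MeasurableSet s} ≤ 𝔠 := by
  obtain ⟨b, hbc, -, hb⟩ := TopologicalSpace.exists_countable_basis X
  have hgen : ‹MeasurableSpace X› = MeasurableSpace.generateFrom b :=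
    (BorelSpace.measurable_eq).trans (borel_eq_generateFrom_of_subbasis hb.eq_generateFrom)
  subst hgen
  exact MeasurableSpace.cardinal_measurableSet_le_continuum
    (hbc.le_aleph0.trans aleph0_le_continuum)

theorem exists_isOpen_dense_measure_compl_pos {X : Type*} [TopologicalSpace X]
    [TopologicalSpace.SeparableSpace X] [MeasurableSpace X] (μ : Measure X)
    [μ.OuterRegular] [NullSingletonClass μ] [NeZero μ] :
    ∃ U, IsOpen U ∧ Dense U ∧ 0 < μ Uᶜ := by
  obtain ⟨Q, hQc, hQd⟩ := TopologicalSpace.exists_countable_dense X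
  obtain ⟨U, hQU, hU, hμU⟩ := Set.exists_isOpen_lt_of_lt Q (μ univ)
    (by rw [hQc.measure_zero μ]; exact (Measure.measure_univ_ne_zero.2 (NeZero.ne μ)).bot_lt)
  refine ⟨U, hU, hQd.mono hQU, pos_iff_ne_zero.2 fun h0 => ?_⟩
  have := measure_univ_le_add_compl (μ := μ) U
  rw [h0, add_zero] at this
  exact hμU.not_ge this

theorem exists_continuum_le_mk_fiber {D : Type} (hD : #D ≤ 𝔠) (d₀ : D) {U : Set ℂ}
    (hU : U ∈ residual ℂ) :
    ∃ h : ℂ → D, (∀ z ∉ U, h z = d₀) ∧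
      ∀ A ∈ BaireFamily, ∀ d, 𝔠 ≤ #{z | z ∈ A ∧ h z = d} := by
  -- A request `(G, d, c)` asks for a point of `G ∩ U` with value `d`; `c` makes `𝔠` copies.
  -- Requests that cannot be met are redirected to `U` so that every target is large.
  let R := {G : Set ℂ // MeasurableSet G} × D × ℂ
  let T : R → Set ℂ := fun r => if 𝔠 ≤ #(r.1.1 ∩ U : Set ℂ) then r.1.1 ∩ U else U
  have hR : #R ≤ 𝔠 := by
    simp only [R, mk_prod, lift_id]
    calc _ ≤ 𝔠 * (𝔠 * 𝔠) :=
          mul_le_mul' mk_measurableSet_le_continuum (mul_le_mul' hD mk_complex.le)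
      _ = 𝔠 := by rw [mul_eq_self aleph0_le_continuum, mul_eq_self aleph0_le_continuum]
  have hU_card : 𝔠 ≤ #U := by
    simpa using continuum_le_mk_inter_of_mem_residual isOpen_univ univ_nonempty hU
  have hTU (r : R) : T r ⊆ U := by
    dsimp only [T]; split_ifs
    exacts [inter_subset_right, subset_rfl]
  obtain ⟨p, hp, hpT⟩ := exists_injective_forall_mem T fun r =>
    hR.trans (by dsimp only [T]; split_ifs <;> assumption)
  refine ⟨extend p (fun r => r.2.1) fun _ => d₀, fun z hz => extend_apply' _ _ _ ?_, ?_⟩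
  · rintro ⟨r, rfl⟩
    exact hz (hTU r (hpT r))
  rintro A ⟨hBP, hnm⟩ d
  obtain ⟨u, hu, hune, t, htG, htd, hsub⟩ := hBP.exists_isOpen_inter_subset hnm
  let G : {G : Set ℂ // MeasurableSet G} := ⟨u ∩ t, (hu.isGδ.inter htG).measurableSet⟩
  have hG : 𝔠 ≤ #(G.1 ∩ U : Set ℂ) := by
    rw [show G.1 ∩ U = u ∩ (t ∩ U) from inter_assoc _ _ _]
    exact continuum_le_mk_inter_of_mem_residual hu hune
      (Filter.inter_mem (residual_of_dense_Gδ htG htd) hU)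
  have hpA (c : ℂ) : p (G, d, c) ∈ A := by
    have := hpT (G, d, c)
    simp only [T, if_pos hG] at this
    exact hsub this.1
  calc 𝔠 = #ℂ := mk_complex.symm
    _ ≤ #{z | z ∈ A ∧ extend p (fun r => r.2.1) (fun _ => d₀) z = d} :=
      mk_le_of_injective (f := fun c => ⟨p (G, d, c), hpA c, hp.extend_apply _ _ _⟩)
        fun c c' hcc' => congrArg (fun r : R => r.2.2) (hp (congrArg Subtype.val hcc'))

theorem univ_mem_BaireFamily : Set.univ ∈ BaireFamily :=
  ⟨⟨Set.univ, isOpen_univ, by simpa using IsMeagre.empty⟩,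
    not_isMeagre_of_isOpen isOpen_univ univ_nonempty⟩

theorem comp_mem_SESC {𝓕 : Set (Set ℂ)} {D : Type*} {h : ℂ → D}
    (hh : ∀ A ∈ 𝓕, ∀ d, 𝔠 ≤ #{z | z ∈ A ∧ h z = d}) {Φ : D → ℂ} {n : ℕ} (hn : 0 < n)
    {P : MvPolynomial (Fin n) ℂ} (hΦ : range Φ = range fun t => MvPolynomial.eval t P) :
    Φ ∘ h ∈ SESC 𝓕 := by
  intro F hF
  have himage : h '' F = Set.univ := eq_univ_of_forall fun d => by
    obtain ⟨⟨z, hzF, hz⟩⟩ := mk_ne_zero_iff.1 (continuum_pos.trans_le (hh F hF d)).ne'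
    exact ⟨z, hzF, hz⟩
  refine ⟨⟨n, hn, P, by rw [image_comp, himage, image_univ, hΦ]⟩, ?_⟩
  rintro _ ⟨z₁, -, rfl⟩
  refine le_antisymm ((mk_set_le _).trans mk_complex.le) ((hh F hF (h z₁)).trans ?_)
  exact mk_le_mk_of_subset fun z hz => ⟨hz.1, congrArg Φ hz.2⟩

theorem eq_zero_of_mem_SESC_LebFamily {g : ℂ → ℂ} (hg : g ∈ SESC LebFamily) {U : Set ℂ}
    (hU : MeasurableSet U) (hUc : 0 < volume Uᶜ) (h0 : ∀ z ∉ U, g z = 0) : g = 0 := by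
  by_contra hne
  obtain ⟨z₀, hz₀⟩ : ∃ z₀, g z₀ ≠ 0 := by simpa [funext_iff] using hne
  have hF : Uᶜ ∪ {z₀} ∈ LebFamily :=
    ⟨(hU.compl.union (measurableSet_singleton z₀)).nullMeasurableSet,
      hUc.trans_le (measure_mono subset_union_left)⟩
  have hfiber : {z | z ∈ Uᶜ ∪ {z₀} ∧ g z = g z₀} = {z₀} := by
    ext z
    constructor
    · rintro ⟨hz | hz, hgz⟩
      · exact absurd (hgz.symm.trans (h0 z hz)) hz₀
      · exact hz
    · rintro rfl
      exact ⟨Or.inr rfl, rfl⟩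
  have := (hg _ hF).2 (g z₀) ⟨z₀, Or.inr rfl, rfl⟩
  rw [hfiber, mk_singleton] at this
  exact (nat_lt_continuum 1).ne (by exact_mod_cast this)

theorem MvPolynomial.aeval_pi_apply {σ X R : Type*} [CommSemiring R] (f : σ → X → R)
    (P : MvPolynomial σ R) (z : X) : aeval f P z = eval (fun i => f i z) P := by
  rw [← coe_aeval_eq_eval]
  exact comp_aeval_apply f (Pi.evalAlgHom R (fun _ => R) z) P

theorem MvPolynomial.exists_eval_ne_zero {σ R : Type*} [CommRing R] [IsDomain R] [Infinite R]
    {P : MvPolynomial σ R} (hP : P ≠ 0) : ∃ t, eval t P ≠ 0 := by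
  by_contra! h
  exact hP (funext fun t => by simpa using h t)

open MvPolynomial in
theorem stronglyAlgebrable_of_forall_aeval {K A ι : Type} [CommRing K] [Nontrivial K]
    [CommRing A] [Algebra K A] {E : Set A} {lam : Cardinal} (x : ι → A) (hι : #ι = lam)
    (hx : ∀ n : ℕ, 0 < n → ∀ P : MvPolynomial (Fin n) K, P ≠ 0 →
      MvPolynomial.constantCoeff P = 0 → ∀ ξ : Fin n → ι, Injective ξ →
        MvPolynomial.aeval (fun i => x (ξ i)) P ≠ 0 ∧
          MvPolynomial.aeval (fun i => x (ξ i)) P ∈ E) :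
    StronglyAlgebrable K E lam := by
  refine ⟨ι, x, hι, fun i j hij => by_contra fun hne => ?_, fun i => ?_, hx⟩
  · have hξ : Injective ![i, j] := by
      intro a b
      fin_cases a <;> fin_cases b <;> simp [hne, Ne.symm hne]
    have := (hx 2 two_pos (X 0 - X 1) (sub_ne_zero.2 (X_injective.ne (by decide)))
      (by simp) ![i, j] hξ).1
    simp [hij] at this
  · simpa using (hx 1 one_pos (X 0) (X_ne_zero 0) (constantCoeff_X K 0) (fun _ => i)
      (injective_of_subsingleton _)).2

/-- `SES(ℂ, 𝓕_Baire) \ SES(ℂ, 𝓕_Leb)` is strongly `2 ^ 𝔠`-algebrable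
in `ℂ^ℂ`. -/
theorem stmt12 :
    StronglyAlgebrable ℂ (SESC BaireFamily \ SESC LebFamily)
      ((2 : Cardinal) ^ Cardinal.continuum) := by
  obtain ⟨U, hUo, hUd, hUc⟩ := exists_isOpen_dense_measure_compl_pos (volume : Measure ℂ)
  obtain ⟨h, h_out, h_fib⟩ := exists_continuum_le_mk_fiber
    (FinTable.mk_le_continuum mk_complex.le mk_complex.le) 0 (residual_of_dense_open hUo hUd)
  have h_surj : Surjective h := fun d => by
    obtain ⟨⟨z, -, hz⟩⟩ := mk_ne_zero_iff.1
      (continuum_pos.trans_le (h_fib _ univ_mem_BaireFamily d)).ne'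
    exact ⟨z, hz⟩
  refine stronglyAlgebrable_of_forall_aeval (fun (S : Set ℂ) z => (h z).eval S)
    (by rw [mk_set, mk_complex]) fun n hn P hP hc ξ hξ => ?_
  set Φ : FinTable ℂ ℂ → ℂ := fun d => MvPolynomial.eval (fun i => d.eval (ξ i)) P
  have hg : MvPolynomial.aeval (fun i z => (h z).eval (ξ i)) P = Φ ∘ h :=
    funext (MvPolynomial.aeval_pi_apply _ P)
  have hΦ : range Φ = range fun t => MvPolynomial.eval t P :=
    (FinTable.surjective_eval_pi hξ).range_comp fun t => MvPolynomial.eval t P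
  have hg0 : Φ ∘ h ≠ 0 := by
    obtain ⟨t, ht⟩ := MvPolynomial.exists_eval_ne_zero hP
    obtain ⟨d, hd⟩ : MvPolynomial.eval t P ∈ range Φ := hΦ ▸ mem_range_self t
    obtain ⟨z, rfl⟩ := h_surj d
    exact fun h0 => ht (hd ▸ congrFun h0 z)
  rw [hg]
  refine ⟨hg0, comp_mem_SESC h_fib hn hΦ, fun hLeb => hg0 ?_⟩
  refine eq_zero_of_mem_SESC_LebFamily hLeb hUo.measurableSet hUc fun z hz => ?_
  simp [Φ, h_out z hz, hc]
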